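/- Let m ≥ 1 and let A₁, …, A_m be elements of 𝔄. Then for every positive integer n, ‖exp(∑_{j=1}^m A_j) − fₙ({A_j})‖ ≤ (2·3^m/n) · (∑_{j=1}^m ‖A_j‖)² · exp(((n+2)/n) · ∑_{j=1}^m ‖A_j‖). -/

import Mathlib

open Filter NormedSpace

/-- `fString 𝕜 A m n` is the symmetrized product string
`exp(A_m/(2n)) ⋯ exp(A₂/(2n)) · exp(A₁/n) · exp(A₂/(2n)) ⋯ exp(A_m/(2n))`,
where the elements are `A 1, …, A m`. -/
noncomputable def fString (𝕜 : Type*) [RCLike 𝕜] {𝔄 : Type*} [NormedRing 𝔄]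
    [NormedAlgebra 𝕜 𝔄] (A : ℕ → 𝔄) (m n : ℕ) : 𝔄 :=
  ((List.range' 2 (m - 1)).foldl
    (fun acc j => exp ((2 * n : 𝕜)⁻¹ • A j) * acc * exp ((2 * n : 𝕜)⁻¹ • A j))
    (exp ((n : 𝕜)⁻¹ • A 1)))

/-!
Call `u` an exponential approximation of `U` at radius `a` if `‖U‖ ≤ a` and
`‖u - 1 - U‖ ≤ eᵃ - 1 - a`, the bound that `exp U` itself satisfies when `‖U‖ ≤ a`.
This notion is stable under products, with `U` and `a` adding up, so the string `fₙ` is an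
exponential approximation of `U = n⁻¹ ∑ Aⱼ` at radius `a = n⁻¹ ∑ ‖Aⱼ‖`, exactly like `exp U`.
Two such approximations of the same `U` differ by at most `2(eᵃ - 1 - a) ≤ 2a²eᵃ`, and
telescoping `uⁿ - vⁿ` costs a factor `n e^{na}`; with `exp (∑ Aⱼ) = (exp U)ⁿ` this gives
`‖exp (∑ Aⱼ) - fₙⁿ‖ ≤ (2/n) s² e^{(n+1)s/n}` for `s = ∑ ‖Aⱼ‖`.
-/

lemma Real.exp_sub_one_sub_le_sq_mul_exp {t : ℝ} (ht : 0 ≤ t) :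
    Real.exp t - 1 - t ≤ t ^ 2 * Real.exp t := by
  have hneg : 1 - t ≤ Real.exp (-t) := by linarith [Real.add_one_le_exp (-t)]
  have hsub : Real.exp t - 1 ≤ t * Real.exp t := by
    have h := mul_le_mul_of_nonneg_left hneg (Real.exp_pos t).le
    rw [← Real.exp_add, add_neg_cancel, Real.exp_zero] at h
    linarith
  nlinarith [mul_le_mul_of_nonneg_left hsub ht]

section ExpRemainder

variable {𝔄 : Type*} [NormedRing 𝔄] [CompleteSpace 𝔄]

lemma hasSum_exp_sub_one_sub (𝕜 : Type*) [RCLike 𝕜] [NormedAlgebra 𝕜 𝔄] (x : 𝔄) :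
    HasSum (fun k : ℕ => ((k + 2).factorial⁻¹ : 𝕜) • x ^ (k + 2)) (exp x - 1 - x) := by
  simpa [Finset.sum_range_succ, sub_sub] using
    (hasSum_nat_add_iff' 2).mpr (exp_series_hasSum_exp' (𝕂 := 𝕜) x)

lemma norm_exp_sub_one_sub_le (𝕜 : Type*) [RCLike 𝕜] [NormedAlgebra 𝕜 𝔄] (x : 𝔄) :
    ‖exp x - 1 - x‖ ≤ Real.exp ‖x‖ - 1 - ‖x‖ := by
  have hreal := hasSum_exp_sub_one_sub ℝ ‖x‖
  rw [← Real.exp_eq_exp_ℝ] at hreal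
  refine (hasSum_exp_sub_one_sub 𝕜 x).norm_le_of_bounded hreal fun k => ?_
  rw [norm_smul, norm_inv, RCLike.norm_natCast, smul_eq_mul]
  gcongr
  exact norm_pow_le' x (Nat.succ_pos _)

lemma exp_eq_exp_inv_smul_pow {𝕜 : Type*} [RCLike 𝕜] [NormedAlgebra 𝕜 𝔄] (x : 𝔄) {n : ℕ}
    (hn : n ≠ 0) :
    exp x = exp ((n : 𝕜)⁻¹ • x) ^ n := by
  let : NormedAlgebra ℚ 𝔄 := NormedAlgebra.restrictScalars ℚ 𝕜 𝔄
  rw [← exp_nsmul, ← Nat.cast_smul_eq_nsmul 𝕜, smul_smul,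
    mul_inv_cancel₀ (Nat.cast_ne_zero.2 hn), one_smul]

end ExpRemainder

section ExpApprox

variable {𝔄 : Type*} [NormedRing 𝔄]

def IsExpApprox (u U : 𝔄) (a : ℝ) : Prop :=
  ‖U‖ ≤ a ∧ ‖u - 1 - U‖ ≤ Real.exp a - 1 - a

lemma isExpApprox_exp (𝕜 : Type*) [RCLike 𝕜] [NormedAlgebra 𝕜 𝔄] [CompleteSpace 𝔄] (x : 𝔄) :
    IsExpApprox (exp x) x ‖x‖ :=
  ⟨le_rfl, norm_exp_sub_one_sub_le 𝕜 x⟩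

lemma isExpApprox_one : IsExpApprox (1 : 𝔄) 0 0 := by
  simp [IsExpApprox]

namespace IsExpApprox

variable {u v U V : 𝔄} {a b : ℝ}

lemma nonneg (h : IsExpApprox u U a) : 0 ≤ a :=
  (norm_nonneg U).trans h.1

lemma mono (h : IsExpApprox u U a) (hab : a ≤ b) : IsExpApprox u U b := by
  refine ⟨h.1.trans hab, h.2.trans ?_⟩
  have hsplit : Real.exp b = Real.exp a * Real.exp (b - a) := by
    rw [← Real.exp_add, add_sub_cancel]
  nlinarith [Real.add_one_le_exp (b - a), Real.one_le_exp h.nonneg]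

lemma mul (hu : IsExpApprox u U a) (hv : IsExpApprox v V b) :
    IsExpApprox (u * v) (U + V) (a + b) := by
  obtain ⟨hU, hR⟩ := hu
  obtain ⟨hV, hR'⟩ := hv
  refine ⟨norm_add_le_of_le hU hV, ?_⟩
  have hexpand : u * v - 1 - (U + V) =
      (u - 1 - U) * (v - 1 - V) + (u - 1 - U) * V + (u - 1 - U)
        + U * (v - 1 - V) + (v - 1 - V) + U * V := by
    noncomm_ring
  rw [hexpand, Real.exp_add]
  have hbound := norm_add_le_of_le (norm_add_le_of_le (norm_add_le_of_le (norm_add_le_of_le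
    (norm_add_le_of_le (norm_mul_le_of_le hR hR') (norm_mul_le_of_le hR hV)) hR)
    (norm_mul_le_of_le hU hR')) hR') (norm_mul_le_of_le hU hV)
  exact hbound.trans_eq (by ring)

lemma pow (h : IsExpApprox u U a) (k : ℕ) : IsExpApprox (u ^ k) (k • U) (k * a) := by
  induction k with
  | zero => simpa using isExpApprox_one
  | succ k ih =>
    rw [pow_succ, succ_nsmul, Nat.cast_succ, add_one_mul]
    exact ih.mul h

lemma norm_mul_le_left (h : IsExpApprox u U a) (x : 𝔄) : ‖u * x‖ ≤ Real.exp a * ‖x‖ := by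
  have hexpand : u * x = (u - 1 - U) * x + x + U * x := by noncomm_ring
  rw [hexpand]
  refine (norm_add_le_of_le (norm_add_le_of_le (norm_mul_le_of_le h.2 le_rfl) le_rfl)
    (norm_mul_le_of_le h.1 le_rfl)).trans_eq ?_
  ring

lemma norm_mul_le_right (h : IsExpApprox u U a) (x : 𝔄) : ‖x * u‖ ≤ Real.exp a * ‖x‖ := by
  have hexpand : x * u = x * (u - 1 - U) + x + x * U := by noncomm_ring
  rw [hexpand]
  refine (norm_add_le_of_le (norm_add_le_of_le (norm_mul_le_of_le le_rfl h.2) le_rfl)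
    (norm_mul_le_of_le le_rfl h.1)).trans_eq ?_
  ring

lemma norm_pow_sub_pow_le (hu : IsExpApprox u U a) (hv : IsExpApprox v V a) (k : ℕ) :
    ‖u ^ k - v ^ k‖ ≤ k * Real.exp (k * a) * ‖u - v‖ := by
  induction k with
  | zero => simp
  | succ k ih =>
    have htelescope : u ^ (k + 1) - v ^ (k + 1) = u ^ k * (u - v) + (u ^ k - v ^ k) * v := by
      rw [pow_succ, pow_succ]; noncomm_ring
    have hexp : Real.exp (k * a) ≤ Real.exp ((k + 1 : ℕ) * a) := by
      gcongr
      · exact hu.nonneg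
      · exact_mod_cast k.le_succ
    rw [htelescope]
    calc ‖u ^ k * (u - v) + (u ^ k - v ^ k) * v‖
        ≤ Real.exp (k * a) * ‖u - v‖ + Real.exp a * (k * Real.exp (k * a) * ‖u - v‖) :=
          norm_add_le_of_le ((hu.pow k).norm_mul_le_left _)
            ((hv.norm_mul_le_right _).trans (by gcongr))
      _ ≤ Real.exp ((k + 1 : ℕ) * a) * ‖u - v‖
            + k * (Real.exp a * Real.exp (k * a)) * ‖u - v‖ := by
          nlinarith [norm_nonneg (u - v)]
      _ = (k + 1 : ℕ) * Real.exp ((k + 1 : ℕ) * a) * ‖u - v‖ := by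
          rw [← Real.exp_add]; push_cast; ring_nf

lemma norm_sub_le (hu : IsExpApprox u U a) (hv : IsExpApprox v U a) :
    ‖u - v‖ ≤ 2 * (Real.exp a - 1 - a) := by
  have hsplit : u - v = (u - 1 - U) - (v - 1 - U) := by abel
  rw [hsplit]
  linarith [_root_.norm_sub_le (u - 1 - U) (v - 1 - U), hu.2, hv.2]

lemma norm_pow_sub_pow_le_sq (hu : IsExpApprox u U a) (hv : IsExpApprox v U a) (n : ℕ) :
    ‖u ^ n - v ^ n‖ ≤ 2 * n * a ^ 2 * Real.exp ((n + 1) * a) := by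
  have hrem : ‖u - v‖ ≤ 2 * (a ^ 2 * Real.exp a) :=
    (hu.norm_sub_le hv).trans (by gcongr; exact Real.exp_sub_one_sub_le_sq_mul_exp hu.nonneg)
  calc ‖u ^ n - v ^ n‖ ≤ n * Real.exp (n * a) * (2 * (a ^ 2 * Real.exp a)) :=
        (hu.norm_pow_sub_pow_le hv n).trans (by gcongr)
    _ = 2 * n * a ^ 2 * Real.exp ((n + 1) * a) := by
        rw [add_one_mul, Real.exp_add]; ring

end IsExpApprox

end ExpApprox

section FString

variable {𝕜 : Type*} [RCLike 𝕜] {𝔄 : Type*} [NormedRing 𝔄] [NormedAlgebra 𝕜 𝔄]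

lemma fString_one (A : ℕ → 𝔄) (n : ℕ) : fString 𝕜 A 1 n = exp ((n : 𝕜)⁻¹ • A 1) := by
  simp [fString]

lemma fString_succ (A : ℕ → 𝔄) (n : ℕ) {m : ℕ} (hm : 1 ≤ m) :
    fString 𝕜 A (m + 1) n =
      exp ((2 * n : 𝕜)⁻¹ • A (m + 1)) * fString 𝕜 A m n * exp ((2 * n : 𝕜)⁻¹ • A (m + 1)) := by
  obtain ⟨k, rfl⟩ : ∃ k, m = k + 1 := ⟨m - 1, by omega⟩
  rw [fString, fString, Nat.add_sub_cancel, Nat.add_sub_cancel, List.range'_concat,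
    List.foldl_append, show 2 + 1 * k = k + 1 + 1 by omega]
  rfl

lemma isExpApprox_fString [CompleteSpace 𝔄] (A : ℕ → 𝔄) (n : ℕ) {m : ℕ} (hm : 1 ≤ m) :
    IsExpApprox (fString 𝕜 A m n) ((n : 𝕜)⁻¹ • ∑ j ∈ Finset.Icc 1 m, A j)
      ((∑ j ∈ Finset.Icc 1 m, ‖A j‖) / n) := by
  induction m, hm using Nat.le_induction with
  | base =>
    simpa [fString_one, norm_smul, div_eq_inv_mul] using isExpApprox_exp 𝕜 ((n : 𝕜)⁻¹ • A 1)
  | succ m hm ih =>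
    have hE := isExpApprox_exp 𝕜 ((2 * n : 𝕜)⁻¹ • A (m + 1))
    rw [norm_smul, norm_inv, norm_mul, RCLike.norm_natCast, RCLike.norm_ofNat] at hE
    rw [fString_succ A n hm, Finset.sum_Icc_succ_top (by omega),
      Finset.sum_Icc_succ_top (by omega)]
    convert (hE.mul ih).mul hE using 1
    · have hhalf : (n : 𝕜)⁻¹ • A (m + 1) =
          (2 * n : 𝕜)⁻¹ • A (m + 1) + (2 * n : 𝕜)⁻¹ • A (m + 1) := by
        rw [← add_smul]; ring_nf
      rw [smul_add, hhalf]
      abel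
    · ring

end FString

theorem suzuki_fString_estimate_ii (𝕜 : Type*) [RCLike 𝕜] {𝔄 : Type*} [NormedRing 𝔄]
    [NormedAlgebra 𝕜 𝔄] [CompleteSpace 𝔄] (m : ℕ) (hm : 1 ≤ m) (A : ℕ → 𝔄)
    (n : ℕ) (hn : 0 < n) :
    ‖exp (∑ j ∈ Finset.Icc 1 m, A j) - (fString 𝕜 A m n) ^ n‖ ≤
      (2 * (3 : ℝ) ^ m / (n : ℝ)) * (∑ j ∈ Finset.Icc 1 m, ‖A j‖) ^ 2 *
        Real.exp ((((n : ℝ) + 2) / (n : ℝ)) * ∑ j ∈ Finset.Icc 1 m, ‖A j‖) := by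
  set s := ∑ j ∈ Finset.Icc 1 m, ‖A j‖
  set U : 𝔄 := (n : 𝕜)⁻¹ • ∑ j ∈ Finset.Icc 1 m, A j
  have hF : IsExpApprox (fString 𝕜 A m n) U (s / n) := isExpApprox_fString A n hm
  have hE : IsExpApprox (exp U) U (s / n) := by
    refine (isExpApprox_exp 𝕜 U).mono ?_
    rw [norm_smul, norm_inv, RCLike.norm_natCast, inv_mul_eq_div]
    gcongr
    exact norm_sum_le _ _
  have hnR : (0 : ℝ) < n := Nat.cast_pos.2 hn
  calc ‖exp (∑ j ∈ Finset.Icc 1 m, A j) - fString 𝕜 A m n ^ n‖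
      = ‖exp U ^ n - fString 𝕜 A m n ^ n‖ := by rw [exp_eq_exp_inv_smul_pow (𝕜 := 𝕜) _ hn.ne']
    _ ≤ 2 * n * (s / n) ^ 2 * Real.exp ((n + 1) * (s / n)) := hE.norm_pow_sub_pow_le_sq hF n
    _ = 2 / n * s ^ 2 * Real.exp ((n + 1) / n * s) := by field_simp
    _ ≤ _ := by
      gcongr
      · exact le_mul_of_one_le_right zero_le_two (one_le_pow₀ (by norm_num))
      · linarith
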